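/- arXiv:2511.01124 — 3 statements merged into one kernel-verified Lean document; each statement's English description precedes it below -/
import Mathlib

section
/- Go-Back-N sender invariant 1: for the sender state (hiA, hiP, cur) with window size N, the property hiA ≤ hiP + 1 is an inductive invariant of the sender transition relation. That is, it holds in the initial state (hiA=1, hiP=1, cur=2), and is preserved by each of the three transitions: rcvAck(a) (which, if a ≤ hiP+1, sets hiA := max(hiA, a) and cur := max(cur, hiA)), advCur (enabled when cur < hiA + N, which sets hiP := max(hiP, cur) then cur := cur + 1), and timeout (enabled when cur = hiA + N, which sets cur := hiA). -/
structure SState where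
  hiA : ℕ
  hiP : ℕ
  cur : ℕ

def rcvAck (s : SState) (a : ℕ) : SState :=
  if a ≤ s.hiP + 1 then
    { hiA := max s.hiA a, hiP := s.hiP, cur := max s.cur (max s.hiA a) }
  else s

def advCur (s : SState) : SState :=
  { hiA := s.hiA, hiP := max s.hiP s.cur, cur := s.cur + 1 }

def timeoutStep (s : SState) : SState :=
  { s with cur := s.hiA }

def senderStep (N : ℕ) (s s' : SState) : Prop :=
  (∃ a : ℕ, 0 < a ∧ s' = rcvAck s a) ∨
  (s.cur < s.hiA + N ∧ s' = advCur s) ∨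
  (s.cur = s.hiA + N ∧ s' = timeoutStep s)

def initialS : SState := ⟨1, 1, 2⟩

theorem sender_inv1 (N : ℕ) (hN : 0 < N) :
    (initialS.hiA ≤ initialS.hiP + 1) ∧
    (∀ s s' : SState, senderStep N s s' → s.hiA ≤ s.hiP + 1 → s'.hiA ≤ s'.hiP + 1) := by
  constructor
  · simp [initialS]
  · rintro s s' (⟨a, ha, rfl⟩ | ⟨h, rfl⟩ | ⟨h, rfl⟩) hinv
    · unfold rcvAck
      split <;> simp_all [max_le_iff] <;> omega
    · simp [advCur]; omega
    · simpa [timeoutStep] using hinv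
end

section
/- Go-Back-N sender invariant 2: with the same sender transition relation, the property hiA ≤ cur ≤ hiA + N is an inductive invariant: it holds initially and is preserved by rcvAck, advCur, and timeout. -/
theorem sender_inv2 (N : ℕ) (hN : 1 ≤ N) :
    (initialS.hiA ≤ initialS.cur ∧ initialS.cur ≤ initialS.hiA + N) ∧
    (∀ s s' : SState, senderStep N s s' →
      s.hiA ≤ s.cur ∧ s.cur ≤ s.hiA + N →
      s'.hiA ≤ s'.cur ∧ s'.cur ≤ s'.hiA + N) := by
  constructor
  · simp [initialS]; omega
  · rintro s s' (⟨a, ha, rfl⟩ | ⟨h, rfl⟩ | ⟨h, rfl⟩) ⟨h1, h2⟩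
    · unfold rcvAck
      split <;> simp_all <;> omega
    · simp [advCur]; omega
    · simp [timeoutStep]
end

section
/- Karn's algorithm invariant: for the sender running Karn's algorithm (which on each send event snd_s(i) increments numT[i] and, if time[i]=0, sets time[i] to the current clock value τ, then increments τ), the following holds at all reachable states: if 0 < i < j and numT[j] > 0, then numT[i] > 0 and time[i] < time[j]. -/
structure KState where
  numT : ℕ → ℕ
  time : ℕ → ℕ
  tau : ℕ

/-- Update on a send event `snd_s i`: increment `numT[i]`, record the first
transmission time, and advance the clock. -/
def sendUpd (s : KState) (i : ℕ) : KState :=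
  { numT := Function.update s.numT i (s.numT i + 1),
    time := if s.time i = 0 then Function.update s.time i s.tau else s.time,
    tau := s.tau + 1 }

/-- Reachable states of the sender monitor: the initial state, send events of
packet `i` (allowed only if every packet with a smaller positive id was already
transmitted), and ack-delivery events (which only advance the clock). -/
inductive KReachable : KState → Prop
  | init : KReachable ⟨fun _ => 0, fun _ => 0, 1⟩
  | send (s : KState) (i : ℕ) (hi : 0 < i)
      (hprev : ∀ k, 0 < k → k < i → 0 < s.numT k)
      (hs : KReachable s) : KReachable (sendUpd s i)
  | ack (s : KState) (hs : KReachable s) : KReachable { s with tau := s.tau + 1 }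

def KInv (s : KState) : Prop :=
  (∀ k, s.time k < s.tau) ∧
  (∀ k, 0 < s.numT k ↔ 0 < s.time k) ∧
  (∀ i j, 0 < i → i < j → 0 < s.numT j → 0 < s.numT i ∧ s.time i < s.time j)

lemma kinv (s : KState) (hs : KReachable s) : KInv s := by
  induction hs with
  | init =>
    refine ⟨fun k => one_pos, fun k => Iff.rfl, fun i j hi hij hj => absurd hj (by simp)⟩
  | ack s hs ih =>
    obtain ⟨h1, h2, h3⟩ := ih
    exact ⟨fun k => (h1 k).trans (Nat.lt_succ_self _), h2, h3⟩
  | send s m hm hprev hs ih =>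
    obtain ⟨h1, h2, h3⟩ := ih
    have htau : 0 < s.tau := (Nat.zero_le _).trans_lt (h1 0)
    constructor
    · intro k
      simp only [sendUpd]
      split
      · rcases eq_or_ne k m with rfl | hne
        · simp only [Function.update_self]; omega
        · rw [Function.update_of_ne hne]; exact (h1 k).trans (Nat.lt_succ_self _)
      · exact (h1 k).trans (Nat.lt_succ_self _)
    constructor
    · intro k
      rcases eq_or_ne k m with rfl | hne
      · simp only [sendUpd, Function.update_self]
        constructor
        · intro _
          split
          · simpa using htau
          · omega
        · intro _; omega
      · simp only [sendUpd, Function.update_of_ne hne]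
        split
        · rw [Function.update_of_ne hne]; exact h2 k
        · exact h2 k
    · intro i j hi hij hj
      simp only [sendUpd] at hj ⊢
      rcases eq_or_ne j m with rfl | hjm
      · -- j = m; i < m so numT i > 0 by hprev
        have hNi : 0 < s.numT i := hprev i hi hij
        have hTi : 0 < s.time i := (h2 i).mp hNi
        have hne : i ≠ j := Nat.ne_of_lt hij
        refine ⟨by rw [Function.update_of_ne hne]; exact hNi, ?_⟩
        by_cases h : s.time j = 0
        · rw [if_pos h, Function.update_of_ne hne, Function.update_self]
          exact h1 i
        · rw [if_neg h]
          have : 0 < s.numT j := (h2 j).mpr (Nat.pos_of_ne_zero h)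
          exact (h3 i j hi hij this).2
      · rw [Function.update_of_ne hjm] at hj
        obtain ⟨hNi, hTij⟩ := h3 i j hi hij hj
        rcases eq_or_ne i m with rfl | him
        · refine ⟨by simp, ?_⟩
          have hTm : 0 < s.time i := (h2 i).mp hNi
          rw [if_neg (Nat.pos_iff_ne_zero.mp hTm)]
          exact hTij
        · refine ⟨by rw [Function.update_of_ne him]; exact hNi, ?_⟩
          split
          · rw [Function.update_of_ne him, Function.update_of_ne hjm]; exact hTij
          · exact hTij

theorem karn_invariants (s : KState) (hs : KReachable s) (i j : ℕ)
    (hi : 0 < i) (hij : i < j) (hj : 0 < s.numT j) :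
    0 < s.numT i ∧ s.time i < s.time j := by
  exact (kinv s hs).2.2 i j hi hij hj
end
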